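/- Let (X, Y) be a joint distribution where X has range 𝒳 and Y has range 𝒴. Suppose X' is a random variable with range 𝒳 such that |X − X'| = ε. Then there exists a joint distribution (X̃, Ỹ) on 𝒳 × 𝒴 whose first marginal X̃ is distributed as X' and whose second marginal Ỹ is distributed as Y, such that |(X, Y) − (X̃, Ỹ)| = ε. -/
import Mathlib


open Finset

abbrev BitStr (n : ℕ) := Fin n → Bool

/-- `p` is a probability distribution on the finite type `α`. -/
def IsProb {α : Type*} [Fintype α] (p : α → ℝ) : Prop :=
  (∀ a, 0 ≤ p a) ∧ ∑ a, p a = 1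

/-- Statistical distance: `max_{T ⊆ α} |p(T) − q(T)|`. -/
noncomputable def statDist {α : Type*} [Fintype α] (p q : α → ℝ) : ℝ :=
  ⨆ T : Finset α, |∑ a ∈ T, p a - ∑ a ∈ T, q a|

/-- `H_∞(p) ≥ k`, i.e. every point has probability at most `2^(-k)`. -/
def IsKSource {α : Type*} [Fintype α] (p : α → ℝ) (k : ℝ) : Prop :=
  ∀ a, p a ≤ (2 : ℝ) ^ (-k)

/-- The uniform distribution on a finite type. -/
noncomputable def unif (α : Type*) [Fintype α] : α → ℝ := fun _ => (Fintype.card α : ℝ)⁻¹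


lemma abs_le_statDist {α : Type*} [Fintype α] (p q : α → ℝ) (T : Finset α) :
    |∑ a ∈ T, p a - ∑ a ∈ T, q a| ≤ statDist p q :=
  le_ciSup (f := fun T : Finset α => |∑ a ∈ T, p a - ∑ a ∈ T, q a|)
    (Set.Finite.bddAbove (Set.finite_range _)) T

lemma statDist_nonneg {α : Type*} [Fintype α] (p q : α → ℝ) : 0 ≤ statDist p q := by
  have := abs_le_statDist p q ∅
  simpa using this

lemma statDist_le {α : Type*} [Fintype α] {p q : α → ℝ} {c : ℝ}
    (h : ∀ T : Finset α, |∑ a ∈ T, p a - ∑ a ∈ T, q a| ≤ c) : statDist p q ≤ c :=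
  ciSup_le h

lemma statDist_eq_sum_posPart {α : Type*} [Fintype α] {p q : α → ℝ}
    (hsum : ∑ a, p a = ∑ a, q a) :
    statDist p q = ∑ a, max (p a - q a) 0 := by
  classical
  have hub : ∀ T : Finset α, ∑ a ∈ T, (p a - q a) ≤ ∑ a, max (p a - q a) 0 := by
    intro T
    calc ∑ a ∈ T, (p a - q a) ≤ ∑ a ∈ T, max (p a - q a) 0 :=
          Finset.sum_le_sum fun a _ => le_max_left _ _
      _ ≤ ∑ a, max (p a - q a) 0 :=
          Finset.sum_le_sum_of_subset_of_nonneg (Finset.subset_univ _)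
            (fun a _ _ => le_max_right _ _)
  apply le_antisymm
  · apply statDist_le
    intro T
    rw [abs_le]
    constructor
    · have h1 : ∑ a ∈ T, p a - ∑ a ∈ T, q a = -(∑ a ∈ Tᶜ, (p a - q a)) := by
        rw [Finset.sum_sub_distrib]
        have hp := Finset.sum_add_sum_compl T p
        have hq := Finset.sum_add_sum_compl T q
        linarith
      rw [h1, neg_le_neg_iff]
      exact hub Tᶜ
    · rw [← Finset.sum_sub_distrib]
      exact hub T
  · set T : Finset α := univ.filter (fun a => 0 ≤ p a - q a) with hT
    have h1 : ∑ a, max (p a - q a) 0 = ∑ a ∈ T, p a - ∑ a ∈ T, q a := by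
      rw [← Finset.sum_sub_distrib]
      rw [← Finset.sum_filter_add_sum_filter_not univ (fun a => 0 ≤ p a - q a)
        (fun a => max (p a - q a) 0)]
      have h2 : ∑ a ∈ univ.filter (fun a => ¬ 0 ≤ p a - q a),
          max (p a - q a) 0 = 0 := by
        apply Finset.sum_eq_zero
        intro a ha
        simp only [Finset.mem_filter] at ha
        exact max_eq_right (le_of_not_ge ha.2)
      rw [h2, add_zero]
      apply Finset.sum_congr rfl
      intro a ha
      simp only [Finset.mem_filter] at ha
      exact max_eq_left ha.2
    rw [h1]
    exact le_trans (le_abs_self _) (abs_le_statDist p q T)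

lemma statDist_fst_le {𝒳 𝒴 : Type*} [Fintype 𝒳] [Fintype 𝒴] (p q : 𝒳 × 𝒴 → ℝ) :
    statDist (fun a => ∑ b, p (a, b)) (fun a => ∑ b, q (a, b)) ≤ statDist p q := by
  apply statDist_le
  intro T
  have h1 : ∀ f : 𝒳 × 𝒴 → ℝ, ∑ a ∈ T, ∑ b, f (a, b) = ∑ x ∈ T ×ˢ univ, f x := by
    intro f; rw [Finset.sum_product]
  rw [h1 p, h1 q]
  exact abs_le_statDist p q (T ×ˢ univ)

/-- If `(X, Y)` is a joint distribution on `𝒳 × 𝒴` and `X'` is a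
distribution on `𝒳` with `|X − X'| = ε`, then there is a joint distribution on `𝒳 × 𝒴`
whose first marginal is `X'`, whose second marginal is that of `Y`, and whose statistical
distance from `(X, Y)` is exactly `ε`. -/
theorem joint_distribution_error_transfer {𝒳 𝒴 : Type*} [Fintype 𝒳] [Fintype 𝒴]
    (p : 𝒳 × 𝒴 → ℝ) (p' : 𝒳 → ℝ) (ε : ℝ)
    (hp : IsProb p) (hp' : IsProb p')
    (hd : statDist (fun a => ∑ b, p (a, b)) p' = ε) :
    ∃ q : 𝒳 × 𝒴 → ℝ, IsProb q ∧
      (∀ a, (∑ b, q (a, b)) = p' a) ∧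
      (∀ b, (∑ a, q (a, b)) = ∑ a, p (a, b)) ∧
      statDist p q = ε := by
  classical
  obtain ⟨hpnn, hpsum⟩ := hp
  obtain ⟨hp'nn, hp'sum⟩ := hp'
  set pX : 𝒳 → ℝ := fun a => ∑ b, p (a, b) with hpXdef
  have hpXnn : ∀ a, 0 ≤ pX a := fun a => Finset.sum_nonneg fun b _ => hpnn (a, b)
  have hpXsum : ∑ a, pX a = 1 := by
    rw [← hpsum, Fintype.sum_prod_type]
  have hεnn : 0 ≤ ε := hd ▸ statDist_nonneg _ _
  rcases eq_or_lt_of_le hεnn with hε0 | hεpos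
  · -- ε = 0 : take q = p
    have hXeq : ∀ a, pX a = p' a := by
      intro a
      have h1 := abs_le_statDist pX p' {a}
      simp only [Finset.sum_singleton] at h1
      rw [hd, ← hε0] at h1
      have := abs_nonneg (pX a - p' a)
      have : |pX a - p' a| = 0 := le_antisymm h1 this
      have := abs_eq_zero.mp this
      linarith
    refine ⟨p, ⟨hpnn, hpsum⟩, fun a => hXeq a, fun b => rfl, ?_⟩
    rw [← hε0]
    apply le_antisymm
    · apply statDist_le; intro T; simp
    · exact statDist_nonneg _ _
  · -- ε > 0 : coupling construction
    have hεne : ε ≠ 0 := ne_of_gt hεpos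
    set m : 𝒳 → ℝ := fun a => min (pX a) (p' a) with hmdef
    set c : 𝒳 → ℝ := fun a => if pX a = 0 then 0 else m a / pX a with hcdef
    have hmnn : ∀ a, 0 ≤ m a := fun a => le_min (hpXnn a) (hp'nn a)
    have hmle : ∀ a, m a ≤ pX a := fun a => min_le_left _ _
    have hmle' : ∀ a, m a ≤ p' a := fun a => min_le_right _ _
    have hc0 : ∀ a, 0 ≤ c a := by
      intro a
      by_cases h : pX a = 0
      · simp [hcdef, h]
      · have hpos : 0 < pX a := lt_of_le_of_ne (hpXnn a) (Ne.symm h)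
        simp only [hcdef, h, if_false]
        exact div_nonneg (hmnn a) (le_of_lt hpos)
    have hc1 : ∀ a, c a ≤ 1 := by
      intro a
      by_cases h : pX a = 0
      · simp [hcdef, h]
      · have hpos : 0 < pX a := lt_of_le_of_ne (hpXnn a) (Ne.symm h)
        simp only [hcdef, h, if_false]
        exact div_le_one_of_le₀ (hmle a) (le_of_lt hpos)
    have hmul : ∀ a, pX a * c a = m a := by
      intro a
      by_cases h : pX a = 0
      · have : m a = 0 := le_antisymm (h ▸ hmle a) (hmnn a)
        simp [hcdef, h, this]
      · simp only [hcdef, h, if_false]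
        field_simp
    have hε1 : ∑ a, (pX a - m a) = ε := by
      rw [← hd, statDist_eq_sum_posPart (by rw [hp'sum]; exact hpXsum)]
      apply Finset.sum_congr rfl
      intro a _
      rcases le_total (pX a) (p' a) with h | h
      · rw [max_eq_right (by linarith), hmdef]
        simp only
        rw [min_eq_left h]; ring
      · rw [max_eq_left (by linarith), hmdef]
        simp only
        rw [min_eq_right h]
    have hε2 : ∑ a, (p' a - m a) = ε := by
      have : ∑ a, (p' a - m a) = ∑ a, (pX a - m a) := by
        rw [Finset.sum_sub_distrib, Finset.sum_sub_distrib, hp'sum, hpXsum]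
      rw [this, hε1]
    set r : 𝒴 → ℝ := fun b => ∑ a, p (a, b) * (1 - c a) with hrdef
    have hrnn : ∀ b, 0 ≤ r b := by
      intro b
      apply Finset.sum_nonneg
      intro a _
      exact mul_nonneg (hpnn (a, b)) (by linarith [hc1 a])
    have hrowsum : ∀ a, ∑ b, p (a, b) * (1 - c a) = pX a - m a := by
      intro a
      rw [← Finset.sum_mul]
      rw [hpXdef]
      simp only
      rw [mul_sub, mul_one, hmul a]
    have hrsum : ∑ b, r b = ε := by
      rw [hrdef]
      simp only
      rw [Finset.sum_comm]
      rw [← hε1]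
      exact Finset.sum_congr rfl fun a _ => hrowsum a
    set q : 𝒳 × 𝒴 → ℝ := fun x => p x * c x.1 + (p' x.1 - m x.1) * (r x.2 / ε)
      with hqdef
    have hqnn : ∀ x, 0 ≤ q x := by
      intro x
      apply add_nonneg
      · exact mul_nonneg (hpnn x) (hc0 x.1)
      · exact mul_nonneg (by linarith [hmle' x.1]) (div_nonneg (hrnn x.2) hεnn)
    have hmarg1 : ∀ a, ∑ b, q (a, b) = p' a := by
      intro a
      simp only [hqdef]
      rw [Finset.sum_add_distrib, ← Finset.mul_sum, ← Finset.sum_div, hrsum,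
        div_self hεne, mul_one, ← Finset.sum_mul]
      show pX a * c a + (p' a - m a) = p' a
      linarith [hmul a]
    have hmarg2 : ∀ b, ∑ a, q (a, b) = ∑ a, p (a, b) := by
      intro b
      simp only [hqdef]
      rw [Finset.sum_add_distrib, ← Finset.sum_mul, hε2,
        mul_comm ε (r b / ε), div_mul_cancel₀ _ hεne]
      show (∑ x : 𝒳, p (x, b) * c x) + (∑ a, p (a, b) * (1 - c a)) = ∑ a, p (a, b)
      rw [← Finset.sum_add_distrib]
      apply Finset.sum_congr rfl
      intro a _
      ring
    have hqsum : ∑ x, q x = 1 := by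
      rw [Fintype.sum_prod_type]
      rw [← hp'sum]
      exact Finset.sum_congr rfl fun a _ => hmarg1 a
    refine ⟨q, ⟨hqnn, hqsum⟩, hmarg1, hmarg2, ?_⟩
    apply le_antisymm
    · rw [statDist_eq_sum_posPart (by rw [hqsum]; exact hpsum)]
      calc ∑ x, max (p x - q x) 0 ≤ ∑ x : 𝒳 × 𝒴, p x * (1 - c x.1) := by
            apply Finset.sum_le_sum
            intro x _
            apply max_le
            · have h1 : 0 ≤ (p' x.1 - m x.1) * (r x.2 / ε) :=
                mul_nonneg (by linarith [hmle' x.1]) (div_nonneg (hrnn x.2) hεnn)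
              have : q x = p x * c x.1 + (p' x.1 - m x.1) * (r x.2 / ε) := rfl
              rw [this]
              nlinarith [hpnn x, hc1 x.1]
            · exact mul_nonneg (hpnn x) (by linarith [hc1 x.1])
        _ = ε := by
            rw [Fintype.sum_prod_type, ← hε1]
            exact Finset.sum_congr rfl fun a _ => hrowsum a
    · have h1 := statDist_fst_le p q
      have h2 : (fun a => ∑ b, q (a, b)) = p' := funext hmarg1
      rw [h2] at h1
      rw [← hd]
      exact h1
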